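/- Let λ ∈ (0, 1/2), Γ ≥ 0, let P be a non-discrete probability measure on ℝ with atom set Ē = {x : P({x}) > 0}, and let n be a positive integer with P(Ē)^n ≤ λ/2. Suppose there exists an (n, M, λ/2) deterministic message transmission feedback code for the channel W_P with peak power constraint Γ, where M > 2/λ. Then for every positive integer N there exists a (2n, N, λ, λ) deterministic identification feedback code for W_P with peak power constraint Γ. -/

import Mathlib

open MeasureTheory

noncomputable section

/-- A feedback encoding function of length `n`: the `t`-th component maps the
previous `t` channel outputs to the next channel input. -/
def FeedbackFn (n : ℕ) := (t : Fin n) → (Fin (t : ℕ) → ℝ) → ℝ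

/-- All components of the feedback encoding function are measurable. -/
def FeedbackFn.Meas {n : ℕ} (f : FeedbackFn n) : Prop := ∀ t, Measurable (f t)

/-- The output sequence: yₜ = fᵗ(y₁,…,y_{t−1}) + zₜ. -/
def outSeq {n : ℕ} (f : FeedbackFn n) (z : Fin n → ℝ) : Fin n → ℝ
  | t => f t (fun s => outSeq f z ⟨s.1, s.2.trans t.2⟩) + z t
termination_by t => (t : ℕ)

/-- Output distribution `W_P^n(·|f)` of the additive-noise channel with noise law `P`
under the feedback encoding function `f`: the pushforward of `P^⊗n` under `outSeq f`. -/
def Wn {n : ℕ} (P : Measure ℝ) (f : FeedbackFn n) : Measure (Fin n → ℝ) :=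
  (Measure.pi fun _ : Fin n => P).map (outSeq f)

/-- Average power constraint `Γ`. -/
def AvgPower {n : ℕ} (f : FeedbackFn n) (Γ : ℝ) : Prop :=
  ∀ y : Fin n → ℝ, ∑ t : Fin n, (f t fun s => y ⟨s.1, s.2.trans t.2⟩) ^ 2 ≤ n * Γ

/-- Peak power constraint `Γ`. -/
def PeakPower {n : ℕ} (f : FeedbackFn n) (Γ : ℝ) : Prop :=
  ∀ (t : Fin n) (y : Fin (t : ℕ) → ℝ), |f t y| ≤ Γ

/-- An `(n, N, λ₁, λ₂)` deterministic identification feedback code for `W_P`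
with peak power constraint `Γ`. -/
def IsIDCodePeak (P : Measure ℝ) (n N : ℕ) (lam₁ lam₂ Γ : ℝ)
    (f : Fin N → FeedbackFn n) (D : Fin N → Set (Fin n → ℝ)) : Prop :=
  (∀ i, (f i).Meas ∧ PeakPower (f i) Γ ∧ MeasurableSet (D i)) ∧
  (∀ i, Wn P (f i) (D i)ᶜ ≤ ENNReal.ofReal lam₁) ∧
  (∀ i j, i ≠ j → Wn P (f i) (D j) ≤ ENNReal.ofReal lam₂)

/-- An `(n, M, λ)` deterministic message transmission feedback code for `W_P`
with peak power constraint `Γ`. -/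
def IsMTCodePeak (P : Measure ℝ) (n M : ℕ) (lam Γ : ℝ)
    (f : Fin M → FeedbackFn n) (D : Fin M → Set (Fin n → ℝ)) : Prop :=
  (∀ i, (f i).Meas ∧ PeakPower (f i) Γ ∧ MeasurableSet (D i)) ∧
  (∀ i j, i ≠ j → Disjoint (D i) (D j)) ∧
  (∀ i, Wn P (f i) (D i)ᶜ ≤ ENNReal.ofReal lam)

/-- `W_P` has positive message transmission feedback capacity with peak power
constraint `Γ`. -/
def PosCapPeak (P : Measure ℝ) (Γ : ℝ) : Prop :=
  ∃ R : ℝ, 0 < R ∧ ∀ lam δ : ℝ, 0 < lam → 0 < δ → ∃ n₀ : ℕ, ∀ n : ℕ, n₀ ≤ n →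
    ∃ M : ℕ, 0 < M ∧ (∃ f D, IsMTCodePeak P n M lam Γ f D) ∧
      R - δ ≤ Real.logb 2 M / n

/-!
The identification code spends its first block of `n` channel uses on sending `0`, so that, through
the feedback, sender and receiver both learn the noise vector `Z ∈ ℝⁿ`. Outside the event
`Z ∈ Ēⁿ`, of probability `P(Ē)ⁿ ≤ λ/2`, the law of `Z` has no atoms; embedding `ℝⁿ` measurably
into `ℝ` and cutting at quantiles of the distribution function, `ℝⁿ` can then be coloured
measurably by `N` colourings with `M` colours any two of which agree with probability at most
`1/M < λ/2`. In the second block message `i` transmits its colour `Tᵢ(Z)` with the transmission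
code, and the receiver for `j` accepts iff `Z ∉ Ēⁿ` and it decodes `Tⱼ(Z)`.
-/

open Set ProbabilityTheory
open scoped ENNReal

namespace ProbabilityTheory

variable (ν : Measure ℝ) [IsProbabilityMeasure ν] [NullSingletonClass ν]

theorem continuous_cdf : Continuous (cdf ν) := by
  refine continuous_iff_continuousAt.2 fun x => ?_
  rw [(cdf ν).mono.continuousAt_iff_leftLim_eq_rightLim, StieltjesFunction.rightLim_eq]
  have h : (cdf ν).measure {x} = 0 := by rw [measure_cdf]; exact measure_singleton x
  rw [StieltjesFunction.measure_singleton, ENNReal.ofReal_eq_zero] at h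
  linarith [(cdf ν).mono.leftLim_le (le_refl x)]

theorem measure_setOf_cdf_le {t : ℝ} (ht : t < 1) :
    ν {y | cdf ν y ≤ t} = ENNReal.ofReal t := by
  set W := {y | cdf ν y ≤ t}
  refine le_antisymm ?_ ?_
  · rcases W.eq_empty_or_nonempty with hW | hW
    · simp [hW]
    have hbdd : BddAbove W := by
      obtain ⟨b, hb⟩ := ((tendsto_cdf_atTop ν).eventually_const_lt ht).exists_forall_of_atTop
      exact ⟨b, fun y hy => not_lt.1 fun hby => (hb y hby.le).not_ge hy⟩
    have hmem : sSup W ∈ W := (isClosed_le (continuous_cdf ν) continuous_const).csSup_mem hW hbdd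
    calc ν W ≤ ν (Iic (sSup W)) := measure_mono fun y hy => le_csSup hbdd hy
      _ = ENNReal.ofReal (cdf ν (sSup W)) := (ofReal_cdf ν _).symm
      _ ≤ ENNReal.ofReal t := ENNReal.ofReal_le_ofReal hmem
  · rcases le_or_gt t 0 with ht0 | ht0
    · simp [ENNReal.ofReal_of_nonpos ht0]
    obtain ⟨a, ha⟩ := ((tendsto_cdf_atBot ν).eventually_le_const ht0).exists
    obtain ⟨b, hb⟩ := ((tendsto_cdf_atTop ν).eventually_const_le ht).exists
    obtain ⟨x, hx⟩ := intermediate_value_univ a b (continuous_cdf ν) ⟨ha, hb⟩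
    calc ENNReal.ofReal t = ν (Iic x) := by rw [← ofReal_cdf, hx]
      _ ≤ ν W := measure_mono fun y (hy : y ≤ x) => show cdf ν y ≤ t from hx ▸ monotone_cdf ν hy

/-- The probability integral transform. -/
theorem map_cdf_of_nullSingletonClass : ν.map (cdf ν) = volume.restrict (Icc 0 1) := by
  refine Measure.ext_of_Iic _ _ fun t => ?_
  rw [Measure.map_apply (continuous_cdf ν).measurable measurableSet_Iic,
    Measure.restrict_apply measurableSet_Iic]
  rcases lt_or_ge t 1 with ht | ht
  · have h : Iic t ∩ Icc (0 : ℝ) 1 = Icc 0 t := by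
      ext y; simp only [mem_inter_iff, mem_Iic, mem_Icc]; grind
    rw [h, Real.volume_Icc, sub_zero]
    exact measure_setOf_cdf_le ν ht
  · have h : cdf ν ⁻¹' Iic t = univ := eq_univ_of_forall fun y => (cdf_le_one ν y).trans ht
    rw [h, inter_eq_right.2 fun y hy => hy.2.trans ht]
    simp

end ProbabilityTheory

theorem Nat.mem_Icc_ceil_sub_one {x : ℝ} (hx : 0 ≤ x) :
    x ∈ Icc ((⌈x⌉₊ - 1 : ℕ) : ℝ) ((⌈x⌉₊ - 1 : ℕ) + 1) := by
  rcases Nat.eq_zero_or_pos ⌈x⌉₊ with h | h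
  · simp only [h, Nat.zero_sub, Nat.cast_zero, zero_add]
    exact ⟨hx, (Nat.ceil_eq_zero.1 h).trans zero_le_one⟩
  · refine ⟨(Nat.lt_ceil.1 (Nat.sub_lt h one_pos)).le, ?_⟩
    rw [← Nat.cast_add_one, Nat.sub_add_cancel h]
    exact Nat.le_ceil x

theorem exists_measurable_fin_measure_preimage_le_inv (ν : Measure ℝ) [IsProbabilityMeasure ν]
    [NullSingletonClass ν] {m : ℕ} (hm : 0 < m) :
    ∃ κ : ℝ → Fin m, Measurable κ ∧ ∀ k, ν (κ ⁻¹' {k}) ≤ (m : ℝ≥0∞)⁻¹ := by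
  have hF := continuous_cdf ν
  have hm' : (0 : ℝ) < m := by exact_mod_cast hm
  have hlt (y : ℝ) : ⌈cdf ν y * m⌉₊ - 1 < m := by
    have : ⌈cdf ν y * m⌉₊ ≤ m := Nat.ceil_le.2 (mul_le_of_le_one_left hm'.le (cdf_le_one ν y))
    omega
  set κ : ℝ → Fin m := fun y => ⟨⌈cdf ν y * m⌉₊ - 1, hlt y⟩
  have hκ (k : Fin m) : κ ⁻¹' {k} = (fun y => ⌈cdf ν y * m⌉₊ - 1) ⁻¹' {(k : ℕ)} := by
    ext y; simp [κ, Fin.ext_iff]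
  refine ⟨κ, measurable_to_countable' fun k => hκ k ▸
    ((hF.measurable.mul_const _).nat_ceil.sub_const 1) (measurableSet_singleton _), fun k => ?_⟩
  have hsub : κ ⁻¹' {k} ⊆ cdf ν ⁻¹' Icc (k / m) ((k + 1) / m) := by
    rintro y rfl
    obtain ⟨h₁, h₂⟩ := Nat.mem_Icc_ceil_sub_one (mul_nonneg (cdf_nonneg ν y) hm'.le)
    exact ⟨(div_le_iff₀ hm').2 h₁, (le_div_iff₀ hm').2 h₂⟩
  calc ν (κ ⁻¹' {k}) ≤ ν.map (cdf ν) (Icc (k / m) ((k + 1) / m)) := by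
        rw [Measure.map_apply hF.measurable measurableSet_Icc]; exact measure_mono hsub
    _ ≤ volume (Icc ((k : ℝ) / m) ((k + 1) / m)) := by
        rw [map_cdf_of_nullSingletonClass]; exact Measure.restrict_le_self _
    _ = (m : ℝ≥0∞)⁻¹ := by
        rw [Real.volume_Icc, ← sub_div, add_sub_cancel_left, one_div,
          ENNReal.ofReal_inv_of_pos hm', ENNReal.ofReal_natCast]

theorem exists_measurable_measure_preimage_le {X β : Type*} [MeasurableSpace X]
    [StandardBorelSpace X] [Fintype β] [Nonempty β] [MeasurableSpace β]
    [MeasurableSingletonClass β] (μ : Measure X) [IsFiniteMeasure μ] [NullSingletonClass μ] :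
    ∃ κ : X → β, Measurable κ ∧ ∀ b, μ (κ ⁻¹' {b}) ≤ μ univ / Fintype.card β := by
  rcases eq_zero_or_neZero μ with rfl | hμ
  · exact ⟨fun _ => Classical.arbitrary β, measurable_const, fun _ => by simp⟩
  have he := measurableEmbedding_embeddingReal X
  set c := μ univ
  have hc : c ≠ 0 := Measure.measure_univ_ne_zero.2 hμ.out
  have hc' : c ≠ ∞ := measure_ne_top μ univ
  set ν : Measure ℝ := c⁻¹ • μ.map (embeddingReal X)
  have hν : μ.map (embeddingReal X) = c • ν := by
    rw [smul_smul, ENNReal.mul_inv_cancel hc hc', one_smul]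
  have : IsProbabilityMeasure ν := ⟨by
    simp [ν, Measure.map_apply he.measurable MeasurableSet.univ, c, ENNReal.inv_mul_cancel hc hc']⟩
  have : NullSingletonClass ν := ⟨fun x => by
    simp [ν, Measure.map_apply he.measurable (measurableSet_singleton x),
      (subsingleton_singleton.preimage he.injective).measure_zero]⟩
  obtain ⟨κ, hκ, hκν⟩ :=
    exists_measurable_fin_measure_preimage_le_inv ν (Fintype.card_pos (α := β))
  refine ⟨(Fintype.equivFin β).symm ∘ κ ∘ embeddingReal X,
    (measurable_of_countable _).comp (hκ.comp he.measurable), fun b => ?_⟩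
  calc μ (((Fintype.equivFin β).symm ∘ κ ∘ embeddingReal X) ⁻¹' {b})
      = c * ν (κ ⁻¹' {Fintype.equivFin β b}) := by
        rw [← smul_eq_mul, ← Measure.smul_apply, ← hν,
          Measure.map_apply he.measurable (hκ (measurableSet_singleton _))]
        congr 1; ext x; simp [Equiv.symm_apply_eq]
    _ ≤ c * (Fintype.card β : ℝ≥0∞)⁻¹ := by gcongr; exact hκν _
    _ = c / Fintype.card β := (div_eq_mul_inv _ _).symm

section Colorings

open Finset

theorem card_filter_apply_eq_apply_mul_le {ι : Type*} [Fintype ι] [DecidableEq ι] {i j : ι}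
    (hij : i ≠ j) (M : ℕ) : #{c : ι → Fin M | c i = c j} * M ≤ M ^ Fintype.card ι := by
  calc #{c : ι → Fin M | c i = c j} * M
      = #(({c : ι → Fin M | c i = c j} : Finset _) ×ˢ (univ : Finset (Fin M))) := by simp
    _ ≤ #(univ : Finset (ι → Fin M)) := by
        refine card_le_card_of_injOn (fun p => Function.update p.1 j p.2) (by simp) ?_
        rintro ⟨c, s⟩ hc ⟨c', s'⟩ hc' h
        replace hc : c i = c j := by simpa using hc
        replace hc' : c' i = c' j := by simpa using hc'
        have hs : s = s' := by simpa using congrFun h j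
        refine Prod.ext (funext fun k => ?_) hs
        by_cases hk : k = j
        · subst hk
          change c k = c' k
          rw [← hc, ← hc']
          simpa [Function.update_of_ne hij] using congrFun h i
        · simpa [Function.update_of_ne hk] using congrFun h k
    _ = M ^ Fintype.card ι := by simp

theorem exists_measurable_colorings {X ι : Type*} [MeasurableSpace X] [StandardBorelSpace X]
    [Fintype ι] [DecidableEq ι] (μ : Measure X) [IsFiniteMeasure μ] [NullSingletonClass μ]
    {M : ℕ} (hM : 0 < M) :
    ∃ T : ι → X → Fin M, (∀ i, Measurable (T i)) ∧
      ∀ i j, i ≠ j → μ {x | T i x = T j x} ≤ μ Set.univ / M := by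
  have : NeZero M := ⟨hM.ne'⟩
  obtain ⟨κ, hκ, hκμ⟩ := exists_measurable_measure_preimage_le (β := ι → Fin M) μ
  refine ⟨fun i x => κ x i, fun i => (measurable_pi_apply i).comp hκ, fun i j hij => ?_⟩
  set K : Finset (ι → Fin M) := {c | c i = c j}
  have hM₀ : (M : ℝ≥0∞) ≠ 0 := by exact_mod_cast hM.ne'
  rw [ENNReal.le_div_iff_mul_le (Or.inl hM₀) (Or.inl (ENNReal.natCast_ne_top M))]
  calc μ {x | κ x i = κ x j} * M = μ (⋃ c ∈ K, κ ⁻¹' {c}) * M := by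
        congr 2; ext x; simp [K]
    _ ≤ (∑ c ∈ K, μ Set.univ / (M : ℝ≥0∞) ^ Fintype.card ι) * M := by
        gcongr
        refine (measure_biUnion_finset_le K _).trans (sum_le_sum fun c _ => ?_)
        simpa using hκμ c
    _ = (#K * M : ℕ) * (μ Set.univ / (M : ℝ≥0∞) ^ Fintype.card ι) := by
        rw [sum_const, nsmul_eq_mul]; push_cast; ring
    _ ≤ (M ^ Fintype.card ι : ℕ) * (μ Set.univ / (M : ℝ≥0∞) ^ Fintype.card ι) := by
        gcongr; exact card_filter_apply_eq_apply_mul_le hij M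
    _ = μ Set.univ := by
        push_cast; exact ENNReal.mul_div_cancel (pow_ne_zero _ hM₀) (by simp)

end Colorings

theorem countable_setOf_measure_singleton_pos {X : Type*} [MeasurableSpace X]
    [MeasurableSingletonClass X] (μ : Measure X) [SFinite μ] : {x | 0 < μ {x}}.Countable :=
  Measure.countable_meas_pos_of_disjoint_iUnion (fun x => measurableSet_singleton x)
    fun _ _ h => disjoint_singleton.2 h

theorem nullSingletonClass_restrict_compl_pi_atoms {ι : Type*} [Fintype ι] {X : ι → Type*}
    [∀ i, MeasurableSpace (X i)] [∀ i, MeasurableSingletonClass (X i)]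
    (μ : ∀ i, Measure (X i)) [∀ i, SigmaFinite (μ i)] :
    NullSingletonClass ((Measure.pi μ).restrict (univ.pi fun i => {x | 0 < μ i {x}})ᶜ) := by
  refine ⟨fun z => ?_⟩
  rw [Measure.restrict_apply (measurableSet_singleton z)]
  by_cases hz : z ∈ univ.pi fun i => {x | 0 < μ i {x}}
  · simp [hz]
  obtain ⟨i, -, hi⟩ := not_forall₂.1 hz
  refine measure_mono_null inter_subset_left ?_
  rw [Measure.pi_singleton]
  exact Finset.prod_eq_zero (Finset.mem_univ i) (nonpos_iff_eq_zero.1 (not_lt.1 hi))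

theorem lintegral_le_measure_add {X : Type*} [MeasurableSpace X] {μ : Measure X}
    [IsProbabilityMeasure μ] {f : X → ℝ≥0∞} {S : Set X} (hS : MeasurableSet S) {ε : ℝ≥0∞}
    (hf : ∀ x, f x ≤ 1) (hfS : ∀ x ∉ S, f x ≤ ε) : ∫⁻ x, f x ∂μ ≤ μ S + ε := by
  calc ∫⁻ x, f x ∂μ ≤ ∫⁻ x, S.indicator 1 x + ε ∂μ := by
        refine lintegral_mono fun x => ?_
        by_cases hx : x ∈ S
        · simpa [hx] using (hf x).trans le_self_add
        · simpa [hx] using hfS x hx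
    _ = μ S + ε := by
        rw [lintegral_add_right _ measurable_const, lintegral_indicator_one hS, lintegral_const,
          measure_univ, mul_one]

def halves {α : Type*} (n : ℕ) (z : Fin (2 * n) → α) : (Fin n → α) × (Fin n → α) :=
  (fun s => z ⟨s, by omega⟩, fun s => z ⟨n + s, by omega⟩)

theorem measurePreserving_halves {α : Type*} [MeasurableSpace α] (μ : Measure α) [SigmaFinite μ]
    (n : ℕ) : MeasurePreserving (halves n) (Measure.pi fun _ : Fin (2 * n) => μ)
      ((Measure.pi fun _ : Fin n => μ).prod (Measure.pi fun _ : Fin n => μ)) := by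
  let F : Fin n ⊕ Fin n ≃ Fin (2 * n) := finSumFinEquiv.trans (finCongr (two_mul n).symm)
  have h : halves n = ⇑(MeasurableEquiv.sumPiEquivProdPi fun _ : Fin n ⊕ Fin n => α) ∘
      ⇑(MeasurableEquiv.piCongrLeft (fun _ => α) F).symm := rfl
  rw [h]
  exact (measurePreserving_sumPiEquivProdPi _).comp
    ((measurePreserving_piCongrLeft (fun _ => μ) F).symm _)

namespace FeedbackFn

variable {α : Type*} {n : ℕ}

theorem apply_congr (f : FeedbackFn n) {t t' : Fin n} (h : t = t') {y : Fin t → ℝ}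
    {y' : Fin t' → ℝ} (hy : ∀ r : Fin t, y r = y' ⟨r, h ▸ r.2⟩) : f t y = f t' y' := by
  subst h
  exact congrArg (f t) (funext hy)

theorem Meas.measurable_outSeq {f : FeedbackFn n} (hf : f.Meas) : Measurable (outSeq f) := by
  suffices h : ∀ (t : ℕ) (ht : t < n), Measurable fun z => outSeq f z ⟨t, ht⟩ from
    measurable_pi_lambda _ fun t => h t t.2
  intro t
  induction t using Nat.strong_induction_on with
  | _ t ih =>
    intro ht
    have hunfold : (fun z => outSeq f z ⟨t, ht⟩) =
        fun z => f ⟨t, ht⟩ (fun s => outSeq f z ⟨s, s.2.trans ht⟩) + z ⟨t, ht⟩ :=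
      funext fun z => by rw [outSeq]
    rw [hunfold]
    exact ((hf _).comp (measurable_pi_lambda _ fun s => ih s s.2 _)).add (measurable_pi_apply _)

/-- Send `0` during the first `n` uses, then the codeword `g (T z₁)` of the message determined
by the first `n` outputs `z₁`. -/
def twoBlock (g : α → FeedbackFn n) (T : (Fin n → ℝ) → α) : FeedbackFn (2 * n) :=
  fun t y => if h : (t : ℕ) < n then 0 else
    g (T fun s => y ⟨s, by omega⟩) ⟨t - n, by omega⟩ fun s : Fin (t - n) => y ⟨n + s, by omega⟩

theorem twoBlock_apply_add (g : α → FeedbackFn n) (T : (Fin n → ℝ) → α) {s : ℕ} (hs : s < n)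
    (y : Fin (n + s) → ℝ) :
    twoBlock g T ⟨n + s, by omega⟩ y =
      g (T fun r => y ⟨r, by omega⟩) ⟨s, hs⟩ fun r : Fin s => y ⟨n + r, by omega⟩ := by
  rw [twoBlock, dif_neg (show ¬n + s < n by omega)]
  exact apply_congr (g _) (Fin.ext (Nat.add_sub_cancel_left ..)) fun r => rfl

theorem halves_outSeq_twoBlock (g : α → FeedbackFn n) (T : (Fin n → ℝ) → α)
    (z : Fin (2 * n) → ℝ) :
    halves n (outSeq (twoBlock g T) z) =
      ((halves n z).1, outSeq (g (T (halves n z).1)) (halves n z).2) := by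
  have hfst : (halves n (outSeq (twoBlock g T) z)).1 = (halves n z).1 := by
    funext s
    change outSeq (twoBlock g T) z ⟨s, _⟩ = z ⟨s, _⟩
    rw [outSeq, twoBlock, dif_pos s.2, zero_add]
  refine Prod.ext hfst (funext fun ⟨s, hs⟩ => ?_)
  induction s using Nat.strong_induction_on with
  | _ s ih =>
    change outSeq (twoBlock g T) z ⟨n + s, _⟩ = outSeq _ _ ⟨s, hs⟩
    rw [outSeq, outSeq]
    refine congrArg₂ (· + ·) ((twoBlock_apply_add g T hs _).trans ?_) rfl
    congr 2
    funext r
    exact ih r r.2 _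

theorem Meas.twoBlock [MeasurableSpace α] [Countable α] [MeasurableSingletonClass α]
    {g : α → FeedbackFn n} (hg : ∀ a, (g a).Meas) {T : (Fin n → ℝ) → α} (hT : Measurable T) :
    (FeedbackFn.twoBlock g T).Meas := by
  intro t
  change Measurable fun y => FeedbackFn.twoBlock g T t y
  by_cases h : (t : ℕ) < n
  · simp only [FeedbackFn.twoBlock, dif_pos h, measurable_const]
  · simp only [FeedbackFn.twoBlock, dif_neg h]
    have hcases : Measurable fun p : α × (Fin t → ℝ) =>
        g p.1 ⟨t - n, by omega⟩ fun s : Fin (t - n) => p.2 ⟨n + s, by omega⟩ :=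
      measurable_from_prod_countable_right fun a =>
        (hg a _).comp (measurable_pi_lambda _ fun s => measurable_pi_apply _)
    exact hcases.comp <|
      (hT.comp (measurable_pi_lambda _ fun s => measurable_pi_apply _)).prodMk measurable_id

end FeedbackFn

section TwoBlock

variable {α : Type*} {n : ℕ}

theorem PeakPower.twoBlock {g : α → FeedbackFn n} {Γ : ℝ} (hg : ∀ a, PeakPower (g a) Γ)
    (hΓ : 0 ≤ Γ) (T : (Fin n → ℝ) → α) : PeakPower (FeedbackFn.twoBlock g T) Γ := by
  intro t y
  unfold FeedbackFn.twoBlock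
  split_ifs
  · simpa using hΓ
  · exact hg _ _ _

theorem Wn_apply (P : Measure ℝ) {f : FeedbackFn n} (hf : f.Meas) {B : Set (Fin n → ℝ)}
    (hB : MeasurableSet B) : Wn P f B = Measure.pi (fun _ => P) (outSeq f ⁻¹' B) :=
  Measure.map_apply hf.measurable_outSeq hB

theorem Wn_twoBlock_preimage_halves [MeasurableSpace α] [Countable α]
    [MeasurableSingletonClass α] (P : Measure ℝ) [SigmaFinite P] {g : α → FeedbackFn n}
    (hg : ∀ a, (g a).Meas) {T : (Fin n → ℝ) → α} (hT : Measurable T)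
    {B : Set ((Fin n → ℝ) × (Fin n → ℝ))} (hB : MeasurableSet B) :
    Wn P (FeedbackFn.twoBlock g T) (halves n ⁻¹' B) =
      ∫⁻ z₁, Measure.pi (fun _ => P) {z₂ | (z₁, outSeq (g (T z₁)) z₂) ∈ B}
        ∂Measure.pi fun _ => P := by
  have hcases : Measurable fun p : α × (Fin n → ℝ) => outSeq (g p.1) p.2 :=
    measurable_from_prod_countable_right fun a => (hg a).measurable_outSeq
  have hΦ : Measurable fun p : (Fin n → ℝ) × (Fin n → ℝ) => (p.1, outSeq (g (T p.1)) p.2) :=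
    measurable_fst.prodMk (hcases.comp ((hT.comp measurable_fst).prodMk measurable_snd))
  have hpre : outSeq (FeedbackFn.twoBlock g T) ⁻¹' (halves n ⁻¹' B) =
      halves n ⁻¹' ((fun p => (p.1, outSeq (g (T p.1)) p.2)) ⁻¹' B) := by
    ext z
    simp only [mem_preimage, FeedbackFn.halves_outSeq_twoBlock]
  rw [Wn_apply P (FeedbackFn.Meas.twoBlock hg hT) ((measurePreserving_halves P n).measurable hB),
    hpre, (measurePreserving_halves P n).measure_preimage (hΦ hB).nullMeasurableSet,
    Measure.prod_apply (hΦ hB)]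
  rfl

end TwoBlock

theorem isIDCodePeak_twoBlock (P : Measure ℝ) [IsProbabilityMeasure P] {n M N : ℕ}
    {lam Γ ε δ : ℝ} {g : Fin M → FeedbackFn n} {D : Fin M → Set (Fin n → ℝ)}
    (hcode : IsMTCodePeak P n M lam Γ g D) (hΓ : 0 ≤ Γ) {A : Set (Fin n → ℝ)}
    (hA : MeasurableSet A) {T : Fin N → (Fin n → ℝ) → Fin M} (hT : ∀ i, Measurable (T i))
    (hAε : Measure.pi (fun _ => P) A ≤ ENNReal.ofReal ε)
    (hTδ : ∀ i j, i ≠ j →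
      Measure.pi (fun _ => P) (Aᶜ ∩ {z | T i z = T j z}) ≤ ENNReal.ofReal δ)
    (hlam : 0 ≤ lam) (hε : 0 ≤ ε) (hδ : 0 ≤ δ) :
    IsIDCodePeak P (2 * n) N (ε + lam) (δ + lam) Γ (fun i => FeedbackFn.twoBlock g (T i))
      (fun j => halves n ⁻¹' {p | p.1 ∉ A ∧ p.2 ∈ D (T j p.1)}) := by
  obtain ⟨hgD, hdisj, herr⟩ := hcode
  have hg k : (g k).Meas := (hgD k).1
  have hfiber k (B : Set (Fin n → ℝ)) (hB : MeasurableSet B) :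
      Measure.pi (fun _ => P) {z₂ | outSeq (g k) z₂ ∈ B} = Wn P (g k) B :=
    (Wn_apply P (hg k) hB).symm
  have hdec j : MeasurableSet {p : (Fin n → ℝ) × (Fin n → ℝ) | p.1 ∉ A ∧ p.2 ∈ D (T j p.1)} := by
    have hgraph : MeasurableSet {q : Fin M × (Fin n → ℝ) | q.2 ∈ D q.1} :=
      measurableSet_setOfPred.2 <| measurable_from_prod_countable_right fun k =>
        measurableSet_setOfPred.1 (hgD k).2.2
    exact (hA.compl.preimage measurable_fst).inter
      (hgraph.preimage (((hT j).comp measurable_fst).prodMk measurable_snd))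
  refine ⟨fun i => ⟨FeedbackFn.Meas.twoBlock hg (hT i),
      PeakPower.twoBlock (fun k => (hgD k).2.1) hΓ _,
      (measurePreserving_halves P n).measurable (hdec i)⟩,
    fun i => ?_, fun i j hij => ?_⟩
  · rw [← preimage_compl, Wn_twoBlock_preimage_halves P hg (hT i) (hdec i).compl,
      ENNReal.ofReal_add hε hlam]
    refine (lintegral_le_measure_add hA (fun _ => prob_le_one) fun z₁ hz₁ => ?_).trans
      (by gcongr)
    have hset : {z₂ | (z₁, outSeq (g (T i z₁)) z₂) ∈ {p | p.1 ∉ A ∧ p.2 ∈ D (T i p.1)}ᶜ} =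
        {z₂ | outSeq (g (T i z₁)) z₂ ∈ (D (T i z₁))ᶜ} := by
      ext; simp [hz₁]
    rw [hset, hfiber _ _ (hgD _).2.2.compl]
    exact herr _
  · rw [Wn_twoBlock_preimage_halves P hg (hT i) (hdec j), ENNReal.ofReal_add hδ hlam]
    have hS : MeasurableSet (Aᶜ ∩ {z | T i z = T j z}) :=
      hA.compl.inter (measurableSet_eq_fun (hT i) (hT j))
    refine (lintegral_le_measure_add hS (fun _ => prob_le_one) fun z₁ hz₁ => ?_).trans
      (by gcongr; exact hTδ i j hij)
    by_cases hz₁A : z₁ ∈ A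
    · simp [hz₁A]
    have hne : T i z₁ ≠ T j z₁ := fun h => hz₁ ⟨hz₁A, h⟩
    have hset : {z₂ | (z₁, outSeq (g (T i z₁)) z₂) ∈ {p | p.1 ∉ A ∧ p.2 ∈ D (T j p.1)}} =
        {z₂ | outSeq (g (T i z₁)) z₂ ∈ D (T j z₁)} := by
      ext; simp [hz₁A]
    rw [hset, hfiber _ _ (hgD _).2.2]
    exact (measure_mono fun y hy => disjoint_right.1 (hdisj _ _ hne) hy).trans (herr _)

theorem ENNReal.inv_natCast_le_ofReal {x : ℝ} {M : ℕ} (hx : 0 < x) (hM : x⁻¹ ≤ M) :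
    (M : ℝ≥0∞)⁻¹ ≤ ENNReal.ofReal x := by
  have hM₀ : (0 : ℝ) < M := (inv_pos.2 hx).trans_le hM
  rw [← ENNReal.ofReal_natCast, ← ENNReal.ofReal_inv_of_pos hM₀]
  exact ENNReal.ofReal_le_ofReal (inv_le_of_inv_le₀ hx hM)

theorem stmt11_general (P : Measure ℝ) [IsProbabilityMeasure P]
    (lam Γ : ℝ) (hlam : lam ∈ Set.Ioo (0 : ℝ) (1 / 2)) (hΓ : 0 ≤ Γ)
    (Ebar : Set ℝ) (hEbar : Ebar = {x : ℝ | 0 < P {x}})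
    (n : ℕ) (hnE : P Ebar ^ n ≤ ENNReal.ofReal (lam / 2))
    (M : ℕ) (hM : 2 / lam < M)
    (hMT : ∃ (f : Fin M → FeedbackFn n) (D : Fin M → Set (Fin n → ℝ)),
      IsMTCodePeak P n M (lam / 2) Γ f D) :
    ∀ N : ℕ, 0 < N →
      ∃ (f : Fin N → FeedbackFn (2 * n)) (D : Fin N → Set (Fin (2 * n) → ℝ)),
        IsIDCodePeak P (2 * n) N lam lam Γ f D := by
  intro N _
  subst hEbar
  obtain ⟨g, D, hcode⟩ := hMT
  have hlam2 : 0 < lam / 2 := half_pos hlam.1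
  have hM0 : 0 < M := by exact_mod_cast (div_pos two_pos hlam.1).trans hM
  set A : Set (Fin n → ℝ) := univ.pi fun _ => {x | 0 < P {x}}
  have hA : MeasurableSet A :=
    .univ_pi fun _ => (countable_setOf_measure_singleton_pos P).measurableSet
  have : NullSingletonClass ((Measure.pi fun _ : Fin n => P).restrict Aᶜ) :=
    nullSingletonClass_restrict_compl_pi_atoms _
  obtain ⟨T, hT, hcol⟩ :=
    exists_measurable_colorings (ι := Fin N) ((Measure.pi fun _ : Fin n => P).restrict Aᶜ) hM0
  refine ⟨_, _, add_halves lam ▸ isIDCodePeak_twoBlock P hcode hΓ hA hT ?_ (fun i j hij => ?_)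
    hlam2.le hlam2.le hlam2.le⟩
  · rwa [Measure.pi_pi, Finset.prod_const, Finset.card_fin]
  · calc Measure.pi (fun _ => P) (Aᶜ ∩ {z | T i z = T j z})
        = (Measure.pi fun _ => P).restrict Aᶜ {z | T i z = T j z} := by
          rw [Measure.restrict_apply' hA.compl, inter_comm]
      _ ≤ (Measure.pi fun _ => P).restrict Aᶜ univ / M := hcol i j hij
      _ ≤ (M : ℝ≥0∞)⁻¹ := by
          rw [ENNReal.div_eq_inv_mul]
          exact mul_le_of_le_one_right' ((Measure.restrict_apply_univ _).trans_le prob_le_one)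
      _ ≤ ENNReal.ofReal (lam / 2) :=
          ENNReal.inv_natCast_le_ofReal hlam2 (by rw [inv_div]; exact hM.le)

/-- **Code construction (peak power).** Let `λ ∈ (0,1/2)`, `Γ ≥ 0`, `P` non-discrete
with atom set `Ē`, and let `n ≥ 1` satisfy `P(Ē)^n ≤ λ/2`. If there is an `(n, M, λ/2)`
deterministic message transmission feedback code for `W_P` with peak power constraint
`Γ` and `M > 2/λ`, then for every `N ≥ 1` there is a `(2n, N, λ, λ)` deterministic
identification feedback code for `W_P` with peak power constraint `Γ`. -/
theorem stmt11 (P : Measure ℝ) [IsProbabilityMeasure P]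
    (lam Γ : ℝ) (hlam : lam ∈ Set.Ioo (0 : ℝ) (1 / 2)) (hΓ : 0 ≤ Γ)
    (Ebar : Set ℝ) (hEbar : Ebar = {x : ℝ | 0 < P {x}})
    (hnd : P Ebar < 1)
    (n : ℕ) (hn : 0 < n) (hnE : P Ebar ^ n ≤ ENNReal.ofReal (lam / 2))
    (M : ℕ) (hM : 2 / lam < M)
    (hMT : ∃ (f : Fin M → FeedbackFn n) (D : Fin M → Set (Fin n → ℝ)),
      IsMTCodePeak P n M (lam / 2) Γ f D) :
    ∀ N : ℕ, 0 < N →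
      ∃ (f : Fin N → FeedbackFn (2 * n)) (D : Fin N → Set (Fin (2 * n) → ℝ)),
        IsIDCodePeak P (2 * n) N lam lam Γ f D :=
  stmt11_general P lam Γ hlam hΓ Ebar hEbar n hnE M hM hMT

end
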